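/- Let α ∈ (0,1] and let m, n ≥ 0 be integers. Then for all x > 0, T_α[x ↦ e^{−x^{2α}} T_α(H_m^α)(x)](x) · H_n^α(x) − T_α[x ↦ e^{−x^{2α}} T_α(H_n^α)(x)](x) · H_m^α(x) + 2α²(m − n) e^{−x^{2α}} H_m^α(x) H_n^α(x) = 0. -/

import Mathlib

/-- The physicists' Hermite polynomials, as real functions:
`H₀ = 1`, `H₁ x = 2 x`, `H_{m+1} x = 2 x * H_m x - 2 m * H_{m-1} x`. -/
noncomputable def hermiteP : ℕ → ℝ → ℝ
  | 0, _ => 1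
  | 1, x => 2 * x
  | (m + 2), x => 2 * x * hermiteP (m + 1) x - 2 * ((m : ℝ) + 1) * hermiteP m x

/-!
Write `H_m^α = H_m ∘ (·)^α`. The chain rule gives `T_α (g ∘ (·)^α) = α · g' ∘ (·)^α`, and
`e^{-x^{2α}} = e^{-u²}` at `u = x^α`, so applying it twice reduces the left-hand side to
`α² (e^{-u²} H_m')' H_n - α² (e^{-u²} H_n')' H_m + 2α²(m - n) e^{-u²} H_m H_n`.
The Sturm–Liouville form of Hermite's equation, `(e^{-u²} H_m')' = -2m e^{-u²} H_m`,
makes this vanish.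
-/

open Real Filter Topology

theorem hermiteP_succ (m : ℕ) (x : ℝ) :
    hermiteP (m + 1) x = 2 * x * hermiteP m x - 2 * m * hermiteP (m - 1) x := by
  cases m with
  | zero => simp [hermiteP]
  | succ k => simp only [hermiteP, Nat.add_sub_cancel]; push_cast; ring

theorem hasDerivAt_hermiteP :
    ∀ (m : ℕ) (x : ℝ), HasDerivAt (hermiteP m) (2 * m * hermiteP (m - 1) x) x
  | 0, x => by simpa [hermiteP] using hasDerivAt_const x (1 : ℝ)
  | 1, x => by
      simpa [hermiteP] using (hasDerivAt_id' x).const_mul (2 : ℝ)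
  | m + 2, x => by
      have h : HasDerivAt (fun y => 2 * y * hermiteP (m + 1) y - 2 * ((m : ℝ) + 1) * hermiteP m y)
          _ x := (((hasDerivAt_id' x).const_mul 2).mul (hasDerivAt_hermiteP (m + 1) x)).sub
            ((hasDerivAt_hermiteP m x).const_mul (2 * ((m : ℝ) + 1)))
      refine h.congr_deriv ?_
      simp only [Nat.add_sub_cancel, Nat.add_succ_sub_one]
      push_cast
      linear_combination (-2 * (m : ℝ) - 2) * hermiteP_succ m x

theorem deriv_hermiteP (m : ℕ) : deriv (hermiteP m) = fun x => 2 * m * hermiteP (m - 1) x :=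
  funext fun x => (hasDerivAt_hermiteP m x).deriv

theorem hasDerivAt_exp_neg_sq_mul_deriv_hermiteP (m : ℕ) (u : ℝ) :
    HasDerivAt (fun u => exp (-u ^ 2) * deriv (hermiteP m) u)
      (-2 * m * exp (-u ^ 2) * hermiteP m u) u := by
  have hexp : HasDerivAt (fun u : ℝ => exp (-u ^ 2)) (exp (-u ^ 2) * -(2 * u)) u := by
    simpa using ((hasDerivAt_pow 2 u).neg).exp
  rw [deriv_hermiteP]
  cases m with
  | zero => simpa using hasDerivAt_const u (0 : ℝ)
  | succ k =>
      simp only [Nat.add_sub_cancel]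
      refine (hexp.mul ((hasDerivAt_hermiteP k u).const_mul (2 * ((k + 1 : ℕ) : ℝ)))).congr_deriv ?_
      rw [hermiteP_succ k u]
      push_cast
      ring

noncomputable def conformableDeriv (α : ℝ) (f : ℝ → ℝ) (x : ℝ) : ℝ :=
  x ^ (1 - α) * deriv f x

theorem conformableDeriv_congr {α x : ℝ} {f g : ℝ → ℝ} (h : f =ᶠ[𝓝 x] g) :
    conformableDeriv α f x = conformableDeriv α g x := by
  rw [conformableDeriv, conformableDeriv, h.deriv_eq]

theorem conformableDeriv_comp_rpow {α x g' : ℝ} {g : ℝ → ℝ} (hx : 0 < x)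
    (hg : HasDerivAt g g' (x ^ α)) :
    conformableDeriv α (fun y => g (y ^ α)) x = α * g' := by
  have hpow : x ^ (1 - α) * x ^ (α - 1) = 1 := by rw [← rpow_add hx]; simp
  have hcomp : HasDerivAt (fun y => g (y ^ α)) (g' * (α * x ^ (α - 1))) x :=
    hg.comp x (hasDerivAt_rpow_const (Or.inl hx.ne'))
  rw [conformableDeriv, hcomp.deriv]
  linear_combination (α * g') * hpow

theorem rpow_two_mul {x : ℝ} (hx : 0 ≤ x) (α : ℝ) : x ^ (2 * α) = (x ^ α) ^ 2 := by
  rw [mul_comm, rpow_mul hx, rpow_two]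

theorem conformableDeriv_exp_mul_conformableDeriv_hermiteP (α : ℝ) (m : ℕ) {x : ℝ}
    (hx : 0 < x) :
    conformableDeriv α (fun y => exp (-(y ^ (2 * α))) *
        conformableDeriv α (fun y => hermiteP m (y ^ α)) y) x
      = -2 * α ^ 2 * m * exp (-(x ^ (2 * α))) * hermiteP m (x ^ α) := by
  have hev : (fun y => exp (-(y ^ (2 * α))) * conformableDeriv α (fun y => hermiteP m (y ^ α)) y)
      =ᶠ[𝓝 x] fun y => α * (exp (-(y ^ α) ^ 2) * deriv (hermiteP m) (y ^ α)) := by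
    filter_upwards [eventually_gt_nhds hx] with y hy
    rw [conformableDeriv_comp_rpow hy (hasDerivAt_hermiteP m _).differentiableAt.hasDerivAt,
      rpow_two_mul hy.le]
    ring
  rw [conformableDeriv_congr hev,
    conformableDeriv_comp_rpow hx ((hasDerivAt_exp_neg_sq_mul_deriv_hermiteP m _).const_mul α),
    rpow_two_mul hx.le]
  ring

theorem stmt_13_general (α : ℝ) (m n : ℕ)
    (T : (ℝ → ℝ) → (ℝ → ℝ)) (hT : T = fun f x => x ^ (1 - α) * deriv f x) :
    ∀ x : ℝ, 0 < x →
      T (fun x : ℝ => Real.exp (-(x ^ (2 * α))) *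
            T (fun x : ℝ => hermiteP m (x ^ α)) x) x * hermiteP n (x ^ α)
        - T (fun x : ℝ => Real.exp (-(x ^ (2 * α))) *
            T (fun x : ℝ => hermiteP n (x ^ α)) x) x * hermiteP m (x ^ α)
        + 2 * α ^ 2 * ((m : ℝ) - (n : ℝ)) * Real.exp (-(x ^ (2 * α))) *
            hermiteP m (x ^ α) * hermiteP n (x ^ α) = 0 := by
  obtain rfl : T = conformableDeriv α := hT
  intro x hx
  rw [conformableDeriv_exp_mul_conformableDeriv_hermiteP α m hx,
    conformableDeriv_exp_mul_conformableDeriv_hermiteP α n hx]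
  ring

theorem stmt_13 (α : ℝ) (hα : α ∈ Set.Ioc (0:ℝ) 1) (m n : ℕ)
    (T : (ℝ → ℝ) → (ℝ → ℝ)) (hT : T = fun f x => x ^ (1 - α) * deriv f x) :
    ∀ x : ℝ, 0 < x →
      T (fun x : ℝ => Real.exp (-(x ^ (2 * α))) *
            T (fun x : ℝ => hermiteP m (x ^ α)) x) x * hermiteP n (x ^ α)
        - T (fun x : ℝ => Real.exp (-(x ^ (2 * α))) *
            T (fun x : ℝ => hermiteP n (x ^ α)) x) x * hermiteP m (x ^ α)
        + 2 * α ^ 2 * ((m : ℝ) - (n : ℝ)) * Real.exp (-(x ^ (2 * α))) *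
            hermiteP m (x ^ α) * hermiteP n (x ^ α) = 0 :=
  stmt_13_general α m n T hT
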